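/- Let t₀ ∈ (0,π), m ≥ 2, and let λ₀ ∈ ℂ satisfy F(λ₀) = 2cos t₀, F^{(j)}(λ₀) = 0 for 1 ≤ j ≤ m−1, and F^{(m)}(λ₀) ≠ 0. Let λ_k : I → ℂ be continuous on an open real interval I containing t₀, with λ_k(t₀) = λ₀ and F(λ_k(t)) = 2cos t for all t ∈ I. Then F'(λ_k(t)) ∼ (t − t₀)^{(m−1)/m} as t → t₀, i.e. there exist δ, c₁, c₂ > 0 such that c₁|t−t₀|^{(m−1)/m} ≤ |F'(λ_k(t))| ≤ c₂|t−t₀|^{(m−1)/m} for all t ∈ I with 0 < |t−t₀| ≤ δ. -/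

import Mathlib

open MeasureTheory Set
open scoped Real Classical

noncomputable section

/-- `y` (with first derivative `yd`) solves the Hill equation `-y'' + q y = λ y` on `[0,1]`
in the Carathéodory sense: `y` and `y'` are absolutely continuous and the equation holds
almost everywhere, expressed via the equivalent integral equations. -/
structure IsHillSolution (q : ℝ → ℂ) (lam : ℂ) (y yd : ℝ → ℂ) : Prop where
  int_yd : IntervalIntegrable yd volume 0 1
  int_rhs : IntervalIntegrable (fun s => q s * y s - lam * y s) volume 0 1
  y_eq : ∀ x ∈ Icc (0:ℝ) 1, y x = y 0 + ∫ s in (0:ℝ)..x, yd s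
  yd_eq : ∀ x ∈ Icc (0:ℝ) 1, yd x = yd 0 + ∫ s in (0:ℝ)..x, (q s * y s - lam * y s)

/-- The standard context for the Hill operator: a `1`-periodic integrable potential `q`
together with the fundamental solutions `θ`, `φ` (with `x`-derivatives `θd`, `φd`)
of `-y'' + q y = λ y` normalized at `x = 0`, jointly continuous in `(x, λ)`,
entire in `λ` for fixed `x`, and satisfying the Wronskian identity. -/
structure HillContext where
  q : ℝ → ℂ
  int_q : IntervalIntegrable q volume 0 1
  periodic_q : ∀ x, q (x + 1) = q x
  θ : ℝ → ℂ → ℂ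
  θd : ℝ → ℂ → ℂ
  φ : ℝ → ℂ → ℂ
  φd : ℝ → ℂ → ℂ
  sol_θ : ∀ lam, IsHillSolution q lam (fun x => θ x lam) (fun x => θd x lam)
  sol_φ : ∀ lam, IsHillSolution q lam (fun x => φ x lam) (fun x => φd x lam)
  θ_init : ∀ lam, θ 0 lam = 1
  θd_init : ∀ lam, θd 0 lam = 0
  φ_init : ∀ lam, φ 0 lam = 0
  φd_init : ∀ lam, φd 0 lam = 1
  θ_cont : Continuous fun p : ℝ × ℂ => θ p.1 p.2
  θd_cont : Continuous fun p : ℝ × ℂ => θd p.1 p.2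
  φ_cont : Continuous fun p : ℝ × ℂ => φ p.1 p.2
  φd_cont : Continuous fun p : ℝ × ℂ => φd p.1 p.2
  θ_entire : ∀ x, Differentiable ℂ (θ x)
  θd_entire : ∀ x, Differentiable ℂ (θd x)
  φ_entire : ∀ x, Differentiable ℂ (φ x)
  φd_entire : ∀ x, Differentiable ℂ (φd x)
  wronskian : ∀ x lam, θ x lam * φd x lam - θd x lam * φ x lam = 1

namespace HillContext

variable (H : HillContext)

/-- The Hill discriminant `F(λ) = θ(1,λ) + φ'(1,λ)`. -/
def F (lam : ℂ) : ℂ := H.θ 1 lam + H.φd 1 lam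

/-- `Φ_t(x,λ) = φ(1,λ)θ(x,λ) + (e^{it} - θ(1,λ))φ(x,λ)`. -/
def Phi (t : ℝ) (x : ℝ) (lam : ℂ) : ℂ :=
  H.φ 1 lam * H.θ x lam + (Complex.exp (Complex.I * t) - H.θ 1 lam) * H.φ x lam

/-- `G_t(x,λ) = θ'(1,λ)φ(x,λ) + (e^{it} - φ'(1,λ))θ(x,λ)`. -/
def G (t : ℝ) (x : ℝ) (lam : ℂ) : ℂ :=
  H.θd 1 lam * H.φ x lam + (Complex.exp (Complex.I * t) - H.φd 1 lam) * H.θ x lam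

end HillContext

/-- The `L²(0,1)` norm of a function. -/
def l2norm (f : ℝ → ℂ) : ℝ := Real.sqrt (∫ x in (0:ℝ)..1, ‖f x‖ ^ 2)

namespace HillContext

variable (H : HillContext)

/-- The normalized eigenfunction `Ψ_{n,t}` along the branch `lamn`. -/
def Psi (lamn : ℝ → ℂ) (t : ℝ) (x : ℝ) : ℂ :=
  if l2norm (fun s => H.Phi t s (lamn t)) ≠ 0 then
    H.Phi t x (lamn t) / (l2norm (fun s => H.Phi t s (lamn t)) : ℂ)
  else
    H.G t x (lamn t) / (l2norm (fun s => H.G t s (lamn t)) : ℂ)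

/-- The normalized adjoint eigenfunction `Ψ*_{n,t}` along the branch `lamn`. -/
def PsiStar (lamn : ℝ → ℂ) (t : ℝ) (x : ℝ) : ℂ :=
  if l2norm (fun s => H.Phi (-t) s (lamn t)) ≠ 0 then
    (starRingEnd ℂ) (H.Phi (-t) x (lamn t)) / (l2norm (fun s => H.Phi (-t) s (lamn t)) : ℂ)
  else
    (starRingEnd ℂ) (H.G (-t) x (lamn t)) / (l2norm (fun s => H.G (-t) s (lamn t)) : ℂ)

/-- `α_n(t) = ∫₀¹ Ψ_{n,t}(x) conj(Ψ*_{n,t}(x)) dx`. -/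
def alpha (lamn : ℝ → ℂ) (t : ℝ) : ℂ :=
  ∫ x in (0:ℝ)..1, H.Psi lamn t x * (starRingEnd ℂ) (H.PsiStar lamn t x)

end HillContext

/-! Near `λ₀`, `F - F(λ₀)` vanishes to order exactly `m` and `F'` to order exactly `m - 1`, so
`‖F(λ) - F(λ₀)‖ ≍ ‖λ - λ₀‖^m` and `‖F'(λ)‖ ≍ ‖λ - λ₀‖^(m-1)`. Along the branch,
`F(λ_k(t)) - F(λ₀) = 2 (cos t - cos t₀) ≍ |t - t₀|` because `sin t₀ ≠ 0`. Hence
`‖λ_k(t) - λ₀‖ ≍ |t - t₀|^(1/m)`, and therefore `‖F'(λ_k(t))‖ ≍ |t - t₀|^((m-1)/m)`. -/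

open Filter Topology Asymptotics

namespace Asymptotics

theorem IsTheta.comp_tendsto {α β E F : Type*} [Norm E] [Norm F] {l : Filter α} {f : α → E}
    {g : α → F} (h : f =Θ[l] g) {k : β → α} {l' : Filter β} (hk : Tendsto k l' l) :
    (f ∘ k) =Θ[l'] (g ∘ k) :=
  ⟨h.1.comp_tendsto hk, h.2.comp_tendsto hk⟩

theorem IsTheta.exists_pos_bounds_nhds {X E F : Type*} [PseudoMetricSpace X]
    [SeminormedAddCommGroup E] [SeminormedAddCommGroup F]
    {f : X → E} {g : X → F} {x₀ : X} (h : f =Θ[𝓝 x₀] g) :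
    ∃ δ c₁ c₂ : ℝ, 0 < δ ∧ 0 < c₁ ∧ 0 < c₂ ∧
      ∀ x, dist x x₀ ≤ δ → c₁ * ‖g x‖ ≤ ‖f x‖ ∧ ‖f x‖ ≤ c₂ * ‖g x‖ := by
  obtain ⟨c₂, hc₂, hupper⟩ := h.1.exists_pos
  obtain ⟨c, hc, hlower⟩ := h.2.exists_pos
  obtain ⟨ε, hε, hball⟩ := Metric.eventually_nhds_iff.mp (hupper.bound.and hlower.bound)
  refine ⟨ε / 2, c⁻¹, c₂, half_pos hε, inv_pos.mpr hc, hc₂, fun x hx => ?_⟩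
  obtain ⟨hfg, hgf⟩ := hball (hx.trans_lt (half_lt_self hε))
  exact ⟨(inv_mul_le_iff₀ hc).mpr hgf, hfg⟩

theorem IsTheta.pow_of_pow {α : Type*} {l : Filter α} {x s : α → ℝ} (hx : 0 ≤ᶠ[l] x)
    (hs : 0 ≤ᶠ[l] s) {m : ℕ} (hm : m ≠ 0) (h : (fun t => x t ^ m) =Θ[l] s) (k : ℕ) :
    (fun t => x t ^ k) =Θ[l] fun t => s t ^ ((k : ℝ) / m) := by
  refine (EventuallyEq.isTheta ?_).trans (h.rpow (hx.mono fun t ht => pow_nonneg ht m) hs)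
  filter_upwards [hx] with t ht
  rw [← Real.rpow_natCast, ← Real.rpow_natCast, ← Real.rpow_mul ht]
  field_simp

end Asymptotics

section AnalyticOrder

variable {𝕜 E : Type*} [NontriviallyNormedField 𝕜] [NormedAddCommGroup E] [NormedSpace 𝕜 E]
  {f : 𝕜 → E} {z₀ : 𝕜} {n : ℕ}

theorem AnalyticAt.isTheta_pow_sub_of_analyticOrderAt_eq (hf : AnalyticAt 𝕜 f z₀)
    (hn : analyticOrderAt f z₀ = n) : f =Θ[𝓝 z₀] fun z => (z - z₀) ^ n := by
  obtain ⟨g, hg, hgz, hfg⟩ := hf.analyticOrderAt_eq_natCast.mp hn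
  have hg_one : g =Θ[𝓝 z₀] fun _ => (1 : 𝕜) :=
    ⟨isBigO_const_of_tendsto hg.continuousAt one_ne_zero,
      (isBigO_const_left_iff_pos_le_norm one_ne_zero).mpr ⟨‖g z₀‖ / 2, by positivity,
        hg.continuousAt.norm.eventually (le_mem_nhds (half_lt_self (norm_pos_iff.mpr hgz)))⟩⟩
  simpa using
    (EventuallyEq.isTheta hfg).trans ((isTheta_refl (fun z => (z - z₀) ^ n) _).smul hg_one)

variable [CharZero 𝕜] [CompleteSpace E]

theorem AnalyticAt.analyticOrderAt_deriv_eq_of_iteratedDeriv (hf : AnalyticAt 𝕜 f z₀)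
    (hzero : ∀ j, 1 ≤ j → j ≤ n → iteratedDeriv j f z₀ = 0)
    (hne : iteratedDeriv (n + 1) f z₀ ≠ 0) : analyticOrderAt (deriv f) z₀ = n := by
  refine (analyticOrderAt_eq_nat_iff_iteratedDeriv_eq_zero hf.deriv).mpr ⟨fun k hk => ?_, ?_⟩
  · rw [← iteratedDeriv_succ']
    exact hzero (k + 1) (by omega) (by omega)
  · rwa [← iteratedDeriv_succ']

theorem AnalyticAt.analyticOrderAt_sub_self_eq_succ (hf : AnalyticAt 𝕜 f z₀)
    (hn : analyticOrderAt (deriv f) z₀ = n) :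
    analyticOrderAt (fun z => f z - f z₀) z₀ = (n + 1 : ℕ) := by
  rw [Nat.cast_add_one]
  refine (analyticOrderAt_deriv_eq_iff (hf.fun_sub analyticAt_const) (sub_self _)).mpr ?_
  rwa [deriv_sub_const_fun]

theorem AnalyticAt.isTheta_deriv_comp_of_isTheta_sub_comp {α : Type*} {l : Filter α}
    (hf : AnalyticAt 𝕜 f z₀) (hn : analyticOrderAt (deriv f) z₀ = n) {u : α → 𝕜}
    (hu : Tendsto u l (𝓝 z₀)) {s : α → ℝ} (hs : 0 ≤ᶠ[l] s) (h : (fun t => f (u t) - f z₀) =Θ[l] s) :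
    (fun t => deriv f (u t)) =Θ[l] fun t => s t ^ ((n : ℝ) / (n + 1)) := by
  have hsub := (hf.fun_sub analyticAt_const).isTheta_pow_sub_of_analyticOrderAt_eq
    (hf.analyticOrderAt_sub_self_eq_succ hn) |>.comp_tendsto hu
  have hpow : (fun t => ‖u t - z₀‖ ^ (n + 1)) =Θ[l] s := by
    simpa [Function.comp_def, norm_pow] using (hsub.symm.trans h).norm_left
  have hderiv : (fun t => deriv f (u t)) =Θ[l] fun t => ‖u t - z₀‖ ^ n := by
    simpa [Function.comp_def, norm_pow] using
      (hf.deriv.isTheta_pow_sub_of_analyticOrderAt_eq hn |>.comp_tendsto hu).norm_right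
  simpa using
    hderiv.trans (hpow.pow_of_pow (.of_forall fun _ => norm_nonneg _) hs n.succ_ne_zero n)

end AnalyticOrder

theorem Real.isTheta_cos_sub_cos {t₀ : ℝ} (h : Real.sin t₀ ≠ 0) :
    (fun t => Real.cos t - Real.cos t₀) =Θ[𝓝 t₀] fun t => |t - t₀| := by
  have hord : analyticOrderAt (fun t => Real.cos t - Real.cos t₀) t₀ = (1 : ℕ) := by
    exact_mod_cast Real.analyticAt_cos.analyticOrderAt_sub_eq_one_of_deriv_ne_zero (by simpa)
  simpa using ((Real.analyticAt_cos.fun_sub analyticAt_const).isTheta_pow_sub_of_analyticOrderAt_eq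
    hord).norm_right

theorem HillContext.differentiable_F (H : HillContext) : Differentiable ℂ H.F :=
  (H.θ_entire 1).add (H.φd_entire 1)

/-- (Formula (62).)  Let `t₀ ∈ (0,π)`, `m ≥ 2` and `λ₀ ∈ ℂ` with `F(λ₀) = 2 cos t₀`,
`F⁽ʲ⁾(λ₀) = 0` for `1 ≤ j ≤ m-1` and `F⁽ᵐ⁾(λ₀) ≠ 0`.  If `λ_k` is a continuous branch on
an open interval `(a,b) ∋ t₀` with `λ_k(t₀) = λ₀` and `F(λ_k(t)) = 2 cos t`, then
`F'(λ_k(t)) ∼ (t - t₀)^{(m-1)/m}` as `t → t₀`. -/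
theorem derivF_branch_asymptotics (H : HillContext)
    (t₀ : ℝ) (ht₀ : t₀ ∈ Ioo 0 π) (m : ℕ) (hm : 2 ≤ m) (lam₀ : ℂ)
    (hF0 : H.F lam₀ = 2 * (Real.cos t₀ : ℂ))
    (hFj : ∀ j : ℕ, 1 ≤ j → j ≤ m - 1 → iteratedDeriv j H.F lam₀ = 0)
    (hFm : iteratedDeriv m H.F lam₀ ≠ 0)
    (a b : ℝ) (ha : a < t₀) (hb : t₀ < b)
    (lamk : ℝ → ℂ) (hcont : ContinuousOn lamk (Ioo a b))
    (hk0 : lamk t₀ = lam₀)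
    (hFk : ∀ t ∈ Ioo a b, H.F (lamk t) = 2 * (Real.cos t : ℂ)) :
    ∃ δ c₁ c₂ : ℝ, 0 < δ ∧ 0 < c₁ ∧ 0 < c₂ ∧
      ∀ t ∈ Ioo a b, 0 < |t - t₀| → |t - t₀| ≤ δ →
        c₁ * |t - t₀| ^ (((m : ℝ) - 1) / (m : ℝ)) ≤ ‖deriv H.F (lamk t)‖ ∧
        ‖deriv H.F (lamk t)‖ ≤ c₂ * |t - t₀| ^ (((m : ℝ) - 1) / (m : ℝ)) := by
  have hF : AnalyticAt ℂ H.F lam₀ := H.differentiable_F.analyticAt lam₀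
  have hm' : m - 1 + 1 = m := by omega
  have hord := hF.analyticOrderAt_deriv_eq_of_iteratedDeriv hFj (by rwa [hm'])
  have hlim : Tendsto lamk (𝓝 t₀) (𝓝 lam₀) := hk0 ▸ hcont.continuousAt (Ioo_mem_nhds ha hb)
  have hcos := Real.isTheta_cos_sub_cos (Real.sin_pos_of_pos_of_lt_pi ht₀.1 ht₀.2).ne'
  have hbranch : (fun t => H.F (lamk t) - H.F lam₀) =Θ[𝓝 t₀] fun t => |t - t₀| := by
    have hcos_eq : (fun t => H.F (lamk t) - H.F lam₀) =ᶠ[𝓝 t₀]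
        fun t => 2 * ((Real.cos t - Real.cos t₀ : ℝ) : ℂ) := by
      filter_upwards [Ioo_mem_nhds ha hb] with t ht
      rw [hFk t ht, hF0]
      push_cast
      ring
    exact hcos_eq.isTheta.trans
      ((isTheta_const_mul_left two_ne_zero).mpr (Complex.isTheta_ofReal_left.mpr hcos))
  have hderiv := hF.isTheta_deriv_comp_of_isTheta_sub_comp hord hlim
    (.of_forall fun _ => abs_nonneg _) hbranch
  rw [Nat.cast_pred (by omega), sub_add_cancel] at hderiv
  obtain ⟨δ, c₁, c₂, hδ, hc₁, hc₂, hbounds⟩ := hderiv.exists_pos_bounds_nhds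
  refine ⟨δ, c₁, c₂, hδ, hc₁, hc₂, fun t _ _ htδ => ?_⟩
  simpa [Real.norm_of_nonneg (Real.rpow_nonneg (abs_nonneg _) _)] using
    hbounds t (by rwa [Real.dist_eq])
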